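/- arXiv:1707.08732 — 4 statements merged into one kernel-verified Lean document; each statement's English description precedes it below -/
import Mathlib

section
/- Let φ, ψ : ℝⁿ → [0, ∞] and let F : ℝⁿ × (0,∞) → ℝⁿ × (0,∞) be defined by F(x,z) = (x/z, 1/z). Then the set F(F(epi φ) + F(epi ψ)) is the epigraph of a function ℝⁿ → [0, ∞], where epi φ = {(x,z) : φ(x) < z} and + denotes Minkowski addition. -/
/-!
Writing `s = 1/z₁`, `t = 1/z₂` and `w = 1/(s + t)`, the point `F(F(x, z₁) + F(y, z₂))` is
`(λ x + (1 - λ) y, w)` with `λ = w s ∈ (0,1)`, and the constraints `φ x < z₁`, `ψ y < z₂` read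
`λ φ(x) < w` and `(1 - λ) ψ(y) < w`. Conversely every such `(λ, x, y, w)` arises, from
`z₁ = w/λ`, `z₂ = w/(1 - λ)`. So the set is the strict epigraph of the infimum of
`max (λ φ(x), (1 - λ) ψ(y))` over all ways of writing `u = λ x + (1 - λ) y`.
-/

open MeasureTheory Set Pointwise

/-- The strict epigraph of `φ : ℝⁿ → [0,∞]`, as a subset of `ℝⁿ × (0,∞)`. -/
def epi {n : ℕ} (φ : (Fin n → ℝ) → ENNReal) : Set ((Fin n → ℝ) × ℝ) :=
  {p | 0 < p.2 ∧ φ p.1 < ENNReal.ofReal p.2}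

/-- The map `F(x,z) = (x/z, 1/z)` on `ℝⁿ × (0,∞)`. -/
noncomputable def Fmap {n : ℕ} (p : (Fin n → ℝ) × ℝ) : (Fin n → ℝ) × ℝ :=
  (p.2⁻¹ • p.1, p.2⁻¹)

theorem ENNReal.ofReal_mul_lt_ofReal_iff {l r : ℝ} (hl : 0 < l) {a : ENNReal} :
    ENNReal.ofReal l * a < ENNReal.ofReal r ↔ a < ENNReal.ofReal (r / l) := by
  rw [ENNReal.ofReal_div_of_pos hl, ENNReal.lt_div_iff_mul_lt (by simp [hl]) (by simp), mul_comm]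

noncomputable def ginf {n : ℕ} (φ ψ : (Fin n → ℝ) → ENNReal) (u : Fin n → ℝ) : ENNReal :=
  ⨅ (l : ℝ) (_ : l ∈ Ioo 0 1) (x : Fin n → ℝ) (y : Fin n → ℝ) (_ : u = l • x + (1 - l) • y),
    max (ENNReal.ofReal l * φ x) (ENNReal.ofReal (1 - l) * ψ y)

theorem mem_image_Fmap_add_image_Fmap_epi_iff {n : ℕ} {φ ψ : (Fin n → ℝ) → ENNReal}
    {p : (Fin n → ℝ) × ℝ} :
    p ∈ Fmap '' (Fmap '' epi φ + Fmap '' epi ψ) ↔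
      0 < p.2 ∧ ∃ l ∈ Ioo (0 : ℝ) 1, ∃ x y, p.1 = l • x + (1 - l) • y ∧
        ENNReal.ofReal l * φ x < ENNReal.ofReal p.2 ∧
        ENNReal.ofReal (1 - l) * ψ y < ENNReal.ofReal p.2 := by
  constructor
  · rintro ⟨_, ⟨_, ⟨⟨x, z₁⟩, ⟨hz₁, hx⟩, rfl⟩, _, ⟨⟨y, z₂⟩, ⟨hz₂, hy⟩, rfl⟩, rfl⟩, rfl⟩
    dsimp only at hz₁ hx hz₂ hy
    simp only [Fmap, Prod.mk_add_mk]
    have hw : 0 < (z₁⁻¹ + z₂⁻¹)⁻¹ := by positivity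
    have hl : 1 - (z₁⁻¹ + z₂⁻¹)⁻¹ / z₁ = (z₁⁻¹ + z₂⁻¹)⁻¹ / z₂ := by field_simp; ring
    set w := (z₁⁻¹ + z₂⁻¹)⁻¹
    refine ⟨hw, w / z₁, ⟨by positivity, by linarith [show 0 < w / z₂ by positivity]⟩, x, y,
      ?_, ?_, ?_⟩
    · rw [hl, smul_add, smul_smul, smul_smul, div_eq_mul_inv, div_eq_mul_inv]
    · rwa [ENNReal.ofReal_mul_lt_ofReal_iff (by positivity), div_div_cancel₀ hw.ne']
    · rwa [hl, ENNReal.ofReal_mul_lt_ofReal_iff (by positivity), div_div_cancel₀ hw.ne']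
  · rintro ⟨hw, l, ⟨hl₀, hl₁⟩, x, y, hu, hx, hy⟩
    have hl₁' : 0 < 1 - l := sub_pos.2 hl₁
    refine ⟨_, ⟨_, ⟨(x, p.2 / l), ⟨by positivity, ?_⟩, rfl⟩,
      _, ⟨(y, p.2 / (1 - l)), ⟨by positivity, ?_⟩, rfl⟩, rfl⟩, ?_⟩
    · exact (ENNReal.ofReal_mul_lt_ofReal_iff hl₀).1 hx
    · exact (ENNReal.ofReal_mul_lt_ofReal_iff hl₁').1 hy
    have hw' : ((p.2 / l)⁻¹ + (p.2 / (1 - l))⁻¹)⁻¹ = p.2 := by field_simp; ring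
    refine Prod.ext ?_ ?_
    · simp only [Fmap, Prod.fst_add, Prod.snd_add, hu, hw', smul_add, smul_smul]
      congr 2 <;> field_simp
    · simpa only [Fmap, Prod.snd_add] using hw'

/-- `F(F(epi φ) + F(epi ψ))` is the strict epigraph of some function `ℝⁿ → [0,∞]`. -/
theorem ginf_is_epigraph (n : ℕ) (φ ψ : (Fin n → ℝ) → ENNReal) :
    ∃ η : (Fin n → ℝ) → ENNReal,
      Fmap '' (Fmap '' epi φ + Fmap '' epi ψ) = epi η := by
  refine ⟨ginf φ ψ, ?_⟩
  ext p
  rw [mem_image_Fmap_add_image_Fmap_epi_iff]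
  simp only [epi, ginf, mem_ofPred_eq, iInf_lt_iff, max_lt_iff, exists_prop]
end

section
/- Let λ ∈ (0,1) and φ, ψ : ℝⁿ → [0,∞]. Define the geometric λ-inf-convolution φ ⊡_λ ψ as the function whose strict epigraph equals F((1−λ)F(epi φ) + λF(epi ψ)), where F(x,z) = (x/z, 1/z). Then for every z ∈ ℝⁿ, (φ ⊡_λ ψ)(z) = inf over t ∈ (0,1) and x, y with z = (1−t)x + ty of max{ ((1−t)/(1−λ)) φ(x), (t/λ) ψ(y) }. -/
open Set Pointwise

/-!
Since `F` is an involution, `(z, c)` lies in `F((1-λ)F(epi φ) + λF(epi ψ))` exactly when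
`(1-λ)F(x, s) + λF(y, r) = F(z, c)` for some `(x, s) ∈ epi φ`, `(y, r) ∈ epi ψ`. Comparing last
coordinates gives `(1-λ)/s + λ/r = 1/c`, so `t := cλ/r ∈ (0,1)` with `1 - t = c(1-λ)/s`, and then the
first coordinates say `z = (1-t)x + ty`. Thus `s = c(1-λ)/(1-t)`, `r = cλ/t`, and `(z, c) ∈ epi η` iff
`max(((1-t)/(1-λ)) φ x, (t/λ) ψ y) < c` for some such decomposition of `z`. A `[0,∞]`-valued function
is determined by which positive reals exceed it, which gives the formula.
-/

namespace ENNReal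

theorem le_of_forall_pos_lt_ofReal {a b : ℝ≥0∞}
    (h : ∀ c : ℝ, 0 < c → a < ENNReal.ofReal c → b < ENNReal.ofReal c) : b ≤ a := by
  refine le_of_forall_gt_imp_ge_of_dense fun d hd => ?_
  obtain ⟨c, -, hac, hcd⟩ := ENNReal.lt_iff_exists_real_btwn.mp hd
  exact (h c (ENNReal.ofReal_pos.mp (pos_of_gt hac)) hac).le.trans hcd.le

theorem eq_of_forall_pos_lt_ofReal_iff {a b : ℝ≥0∞}
    (h : ∀ c : ℝ, 0 < c → (a < ENNReal.ofReal c ↔ b < ENNReal.ofReal c)) : a = b :=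
  le_antisymm (le_of_forall_pos_lt_ofReal fun c hc => (h c hc).mpr)
    (le_of_forall_pos_lt_ofReal fun c hc => (h c hc).mp)

theorem ofReal_mul_lt_ofReal_iff_s5 {a c : ℝ} (ha : 0 < a) {b : ℝ≥0∞} :
    ENNReal.ofReal a * b < ENNReal.ofReal c ↔ b < ENNReal.ofReal (c / a) := by
  rw [ENNReal.ofReal_div_of_pos ha, ENNReal.lt_div_iff_mul_lt (by simp [ha]) (by simp), mul_comm]

end ENNReal

theorem mem_epi_iff_ofReal_div_mul_lt {n : ℕ} {φ : (Fin n → ℝ) → ENNReal} {x : Fin n → ℝ}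
    {a b c : ℝ} (ha : 0 < a) (hb : 0 < b) (hc : 0 < c) :
    (x, c * b / a) ∈ epi φ ↔ ENNReal.ofReal (a / b) * φ x < ENNReal.ofReal c := by
  rw [ENNReal.ofReal_mul_lt_ofReal_iff_s5 (div_pos ha hb), div_div_eq_mul_div]
  exact and_iff_right (by positivity)

theorem Fmap_smul_add_smul_Fmap {n : ℕ} {l s r t c : ℝ} (x y : Fin n → ℝ) (hc : c ≠ 0)
    (hs : (1 - l) / s = (1 - t) / c) (hr : l / r = t / c) :
    Fmap ((1 - l) • Fmap (x, s) + l • Fmap (y, r)) = ((1 - t) • x + t • y, c) := by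
  simp only [Fmap, Prod.smul_mk, Prod.mk_add_mk, smul_eq_mul, smul_smul, ← div_eq_mul_inv, hs, hr]
  have hsum : (1 - t) / c + t / c = c⁻¹ := by rw [← add_div, sub_add_cancel, one_div]
  rw [hsum, inv_inv, smul_add, smul_smul, smul_smul, mul_div_cancel₀ _ hc, mul_div_cancel₀ _ hc]

theorem mem_Fmap_image_smul_add_smul_iff {n : ℕ} {l : ℝ} (hl : l ∈ Ioo (0 : ℝ) 1)
    {A B : Set ((Fin n → ℝ) × ℝ)} (hA : ∀ p ∈ A, 0 < p.2) (hB : ∀ p ∈ B, 0 < p.2)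
    (z : Fin n → ℝ) (c : ℝ) :
    (z, c) ∈ Fmap '' ((1 - l) • (Fmap '' A) + l • (Fmap '' B)) ↔
      ∃ t ∈ Ioo (0 : ℝ) 1, ∃ x y, z = (1 - t) • x + t • y ∧
        (x, c * (1 - l) / (1 - t)) ∈ A ∧ (y, c * l / t) ∈ B := by
  obtain ⟨hl0, hl1⟩ := hl
  have hl1' : 0 < 1 - l := sub_pos.mpr hl1
  constructor
  · rintro ⟨_, ⟨_, ⟨_, ⟨⟨x, s⟩, hxs, rfl⟩, rfl⟩, _, ⟨_, ⟨⟨y, r⟩, hyr, rfl⟩, rfl⟩, rfl⟩, hzc⟩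
    have hs : 0 < s := hA _ hxs
    have hr : 0 < r := hB _ hyr
    set w := (1 - l) / s + l / r with hw_def
    have hw : 0 < w := by positivity
    set t := l / r / w with ht_def
    have ht1 : t < 1 := (div_lt_one hw).mpr (by rw [hw_def]; linarith [div_pos hl1' hs])
    rw [Fmap_smul_add_smul_Fmap x y (inv_ne_zero hw.ne') (t := t)
      (by rw [ht_def, hw_def]; field_simp; ring) (by rw [ht_def]; field_simp)] at hzc
    obtain ⟨rfl, rfl⟩ := Prod.mk.inj hzc
    refine ⟨t, ⟨by positivity, ht1⟩, x, y, rfl, ?_, ?_⟩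
    · convert hxs using 2
      rw [ht_def, hw_def]
      field_simp
      ring
    · convert hyr using 2
      rw [ht_def]
      field_simp
  · rintro ⟨t, ⟨ht0, ht1⟩, x, y, rfl, hx, hy⟩
    have ht1' : 0 < 1 - t := sub_pos.mpr ht1
    have hc : c ≠ 0 := by
      rintro rfl
      simpa using hA _ hx
    refine ⟨_, add_mem_add (smul_mem_smul_set (mem_image_of_mem _ hx))
      (smul_mem_smul_set (mem_image_of_mem _ hy)), Fmap_smul_add_smul_Fmap x y hc ?_ ?_⟩
    · field_simp
    · field_simp

/-- Formula for the geometric `λ`-inf-convolution: if `η` is the function with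
strict epigraph `F((1-λ)F(epi φ) + λF(epi ψ))`, then
`η z = inf_{t ∈ (0,1), z=(1-t)x+ty} max{((1-t)/(1-λ))φ(x), (t/λ)ψ(y)}`. -/
theorem ginf_formula (n : ℕ) (l : ℝ) (hl : l ∈ Set.Ioo (0 : ℝ) 1)
    (φ ψ η : (Fin n → ℝ) → ENNReal)
    (hη : epi η = Fmap '' ((1 - l) • (Fmap '' epi φ) + l • (Fmap '' epi ψ))) :
    ∀ z : Fin n → ℝ,
      η z = ⨅ (t : ℝ) (_ : t ∈ Set.Ioo (0 : ℝ) 1) (x : Fin n → ℝ) (y : Fin n → ℝ)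
        (_ : z = (1 - t) • x + t • y),
        max (ENNReal.ofReal ((1 - t) / (1 - l)) * φ x)
            (ENNReal.ofReal (t / l) * ψ y) := by
  intro z
  refine ENNReal.eq_of_forall_pos_lt_ofReal_iff fun c hc => ?_
  calc η z < ENNReal.ofReal c ↔ (z, c) ∈ epi η := (and_iff_right hc).symm
    _ ↔ ∃ t ∈ Ioo (0 : ℝ) 1, ∃ x y, z = (1 - t) • x + t • y ∧
        (x, c * (1 - l) / (1 - t)) ∈ epi φ ∧ (y, c * l / t) ∈ epi ψ := by
      rw [hη]
      exact mem_Fmap_image_smul_add_smul_iff hl (fun _ hp => hp.1) (fun _ hp => hp.1) z c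
    _ ↔ ∃ t ∈ Ioo (0 : ℝ) 1, ∃ x y, z = (1 - t) • x + t • y ∧
        max (ENNReal.ofReal ((1 - t) / (1 - l)) * φ x) (ENNReal.ofReal (t / l) * ψ y) <
          ENNReal.ofReal c := by
      refine exists_congr fun t => and_congr_right fun ht =>
        exists₂_congr fun x y => and_congr_right fun _ => ?_
      rw [max_lt_iff, mem_epi_iff_ofReal_div_mul_lt (sub_pos.mpr ht.2) (sub_pos.mpr hl.2) hc,
        mem_epi_iff_ofReal_div_mul_lt ht.1 hl.1 hc]
    _ ↔ _ := by simp only [iInf_lt_iff, exists_prop]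
end

section
/- Let ν be the measure on ℝⁿ × (0,∞) with density (x,z) ↦ e^{−1/z} z^{−(n+2)} with respect to Lebesgue measure. Then for every measurable φ : ℝⁿ → [0,∞], ν(F(epi φ)) = ∫_{ℝⁿ} e^{−φ(x)} dx, where F(x,z) = (x/z, 1/z) and epi φ = {(x,z) : φ(x) < z}. -/
open MeasureTheory Set Pointwise

/-- `e^{-a}` for `a ∈ [0,∞]`, with `e^{-∞} = 0`. -/
noncomputable def negExp (a : ENNReal) : ENNReal :=
  if a = ⊤ then 0 else ENNReal.ofReal (Real.exp (-a.toReal))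

open scoped ENNReal

/-! `ν` is the image under `Fmap` of `dx ⊗ e^{-z} dz` on `ℝⁿ × (0,∞)`. Fibrewise, `Fmap` dilates the
slice at height `z` by `z⁻¹`, with Jacobian `z⁻ⁿ`, and maps heights by `w = z⁻¹`, with Jacobian
`z⁻²`; together they turn `e^{-z} dz dx` into the density `e^{-1/w} w^{-(n+2)}` of `ν`. Since `Fmap`
is an involution off `{z = 0}`, `ν (Fmap '' epi φ)` is the mass of `epi φ`, which by Tonelli is
`∫ ∫_{z > φ x} e^{-z} dz dx = ∫ e^{-φ}`. -/

lemma lintegral_Ioi_zero_comp_inv (g : ℝ → ℝ≥0∞) :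
    ∫⁻ w in Ioi 0, g w = ∫⁻ z in Ioi 0, ENNReal.ofReal (z ^ 2)⁻¹ * g z⁻¹ := by
  have himage : (·⁻¹) '' Ioi (0 : ℝ) = Ioi 0 := by
    ext w
    simp
  have hderiv (z : ℝ) (hz : z ∈ Ioi 0) : HasDerivWithinAt (·⁻¹) (-(z ^ 2)⁻¹) (Ioi 0) z :=
    (hasDerivAt_inv hz.ne').hasDerivWithinAt
  conv_lhs => rw [← himage]
  rw [lintegral_image_eq_lintegral_abs_deriv_mul measurableSet_Ioi hderiv
    inv_injective.injOn g]
  simp only [abs_neg, abs_inv, abs_sq]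

lemma lintegral_exp_neg_Ioi (c : ℝ) :
    ∫⁻ z in Ioi c, ENNReal.ofReal (Real.exp (-z)) = ENNReal.ofReal (Real.exp (-c)) := by
  rw [← ofReal_integral_eq_lintegral_ofReal, integral_exp_neg_Ioi]
  · simpa using (exp_neg_integrableOn_Ioi c one_pos).integrable
  · exact .of_forall fun z => (Real.exp_pos _).le

noncomputable def expHalfLine : Measure ℝ :=
  (volume.restrict (Ioi 0)).withDensity fun z => ENNReal.ofReal (Real.exp (-z))

instance : SFinite expHalfLine := by
  unfold expHalfLine
  infer_instance

lemma lintegral_expHalfLine (f : ℝ → ℝ≥0∞) :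
    ∫⁻ z, f z ∂expHalfLine = ∫⁻ z in Ioi 0, ENNReal.ofReal (Real.exp (-z)) * f z :=
  lintegral_withDensity_eq_lintegral_mul_non_measurable₀ _ (by fun_prop)
    (.of_forall fun _ => ENNReal.ofReal_lt_top) f

lemma expHalfLine_setOf_pos_and_lt_ofReal (a : ℝ≥0∞) :
    expHalfLine {z | 0 < z ∧ a < ENNReal.ofReal z} = negExp a := by
  rcases eq_or_ne a ⊤ with rfl | ha
  · simp [negExp]
  have hset : {z | 0 < z ∧ a < ENNReal.ofReal z} = Ioi a.toReal := by
    ext z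
    change 0 < z ∧ a < ENNReal.ofReal z ↔ a.toReal < z
    rw [ENNReal.lt_ofReal_iff_toReal_lt ha]
    exact ⟨And.right, fun h => ⟨ENNReal.toReal_nonneg.trans_lt h, h⟩⟩
  rw [hset, expHalfLine, withDensity_apply _ measurableSet_Ioi,
    Measure.restrict_restrict measurableSet_Ioi,
    inter_eq_left.2 (Ioi_subset_Ioi ENNReal.toReal_nonneg), lintegral_exp_neg_Ioi, negExp,
    if_neg ha]

lemma measurableSet_epi {n : ℕ} {φ : (Fin n → ℝ) → ℝ≥0∞} (hφ : Measurable φ) :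
    MeasurableSet (epi φ) :=
  (measurableSet_lt measurable_const measurable_snd).inter
    (measurableSet_lt (hφ.comp measurable_fst) measurable_snd.ennreal_ofReal)

lemma prod_expHalfLine_epi {n : ℕ} (μ : Measure (Fin n → ℝ)) {φ : (Fin n → ℝ) → ℝ≥0∞}
    (hφ : Measurable φ) : (μ.prod expHalfLine) (epi φ) = ∫⁻ x, negExp (φ x) ∂μ := by
  rw [Measure.prod_apply (measurableSet_epi hφ)]
  exact lintegral_congr fun x => expHalfLine_setOf_pos_and_lt_ofReal (φ x)

lemma measurable_Fmap {n : ℕ} : Measurable (Fmap : (Fin n → ℝ) × ℝ → (Fin n → ℝ) × ℝ) :=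
  (measurable_snd.inv.smul measurable_fst).prodMk measurable_snd.inv

lemma Fmap_Fmap {n : ℕ} {p : (Fin n → ℝ) × ℝ} (hp : p.2 ≠ 0) : Fmap (Fmap p) = p := by
  simp [Fmap, smul_smul, hp]

lemma image_Fmap_eq_preimage {n : ℕ} {S : Set ((Fin n → ℝ) × ℝ)} (hS : ∀ p ∈ S, p.2 ≠ 0) :
    Fmap '' S = Fmap ⁻¹' S := by
  ext p
  refine ⟨?_, fun hp => ⟨Fmap p, hp, Fmap_Fmap ?_⟩⟩
  · rintro ⟨q, hq, rfl⟩
    rwa [mem_preimage, Fmap_Fmap (hS q hq)]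
  · simpa [Fmap] using hS _ hp

lemma preimage_Fmap_preimage_Fmap {n : ℕ} {S : Set ((Fin n → ℝ) × ℝ)} (hS : ∀ p ∈ S, p.2 ≠ 0) :
    Fmap ⁻¹' (Fmap ⁻¹' S) = S := by
  ext p
  refine ⟨fun hp => ?_, fun hp => ?_⟩
  · have := hS _ hp
    rwa [mem_preimage, mem_preimage, Fmap_Fmap (by simpa [Fmap] using this)] at hp
  · rwa [mem_preimage, mem_preimage, Fmap_Fmap (hS p hp)]

lemma map_Fmap_volume_prod_expHalfLine (n : ℕ) :
    ((volume : Measure (Fin n → ℝ)).prod expHalfLine).map Fmap =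
      volume.withDensity (fun p : (Fin n → ℝ) × ℝ =>
        if 0 < p.2 then ENNReal.ofReal (Real.exp (-p.2⁻¹) * p.2 ^ (-(n + 2 : ℝ))) else 0) := by
  let ρ : ℝ → ℝ≥0∞ := fun w => ENNReal.ofReal (Real.exp (-w⁻¹) * w ^ (-(n + 2 : ℝ)))
  have hρ : Measurable ρ := by fun_prop
  have hρ_inv (z : ℝ) (hz : 0 < z) : ENNReal.ofReal (z ^ 2)⁻¹ * ρ z⁻¹ =
      ENNReal.ofReal (Real.exp (-z)) * ENNReal.ofReal |(z⁻¹ ^ n)⁻¹| := by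
    rw [← ENNReal.ofReal_mul (by positivity), ← ENNReal.ofReal_mul (by positivity), inv_inv,
      Real.inv_rpow hz.le, Real.rpow_neg hz.le, inv_inv, abs_of_pos (by positivity), inv_pow,
      inv_inv]
    congr 1
    norm_cast
    field_simp
    ring
  change _ = (volume : Measure ((Fin n → ℝ) × ℝ)).withDensity fun p => (Ioi 0).indicator ρ p.2
  rw [Measure.volume_eq_prod, ← prod_withDensity_right (hρ.indicator measurableSet_Ioi),
    withDensity_indicator measurableSet_Ioi]
  ext T hT
  rw [Measure.map_apply measurable_Fmap hT, Measure.prod_apply_symm (measurable_Fmap hT),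
    Measure.prod_apply_symm hT, lintegral_expHalfLine,
    lintegral_withDensity_eq_lintegral_mul _ hρ (measurable_measure_prodMk_right hT)]
  conv_rhs => rw [lintegral_Ioi_zero_comp_inv]
  refine setLIntegral_congr_fun measurableSet_Ioi fun z hz => ?_
  have hfibre : (fun x => (x, z)) ⁻¹' (Fmap ⁻¹' T) =
      (z⁻¹ • ·) ⁻¹' ((fun y => (y, z⁻¹)) ⁻¹' T) := rfl
  rw [hfibre, Measure.addHaar_preimage_smul _ (inv_ne_zero (ne_of_gt hz)), Module.finrank_fin_fun,
    Pi.mul_apply, ← mul_assoc, ← hρ_inv z hz, mul_assoc]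

theorem measure_nu_of_Fmap_epi (n : ℕ)
    (ν : Measure ((Fin n → ℝ) × ℝ))
    (hν : ν = volume.withDensity (fun p =>
      if 0 < p.2 then ENNReal.ofReal (Real.exp (-p.2⁻¹) * p.2 ^ (-(n + 2 : ℝ))) else 0))
    (φ : (Fin n → ℝ) → ENNReal) (hφ : Measurable φ) :
    ν (Fmap '' epi φ) = ∫⁻ x, negExp (φ x) := by
  have hepi : ∀ p ∈ epi φ, p.2 ≠ 0 := fun p hp => hp.1.ne'
  rw [hν, ← map_Fmap_volume_prod_expHalfLine, image_Fmap_eq_preimage hepi,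
    Measure.map_apply measurable_Fmap (measurable_Fmap (measurableSet_epi hφ)),
    preimage_Fmap_preimage_Fmap hepi, prod_expHalfLine_epi volume hφ]
end

section
/- For λ ∈ (0,1), p₀, p₁ > 0 and |x₀|, |x₁| > 0, define β = λ p₀ |x₁| / ((1−λ) p₁ |x₀| + λ p₀ |x₁|) ∈ (0,1) and p_λ by p_λ u_λ = (1−β) p₀ u₀ + β p₁ u₁ where u_i = x_i/|x_i| and x_λ = (1−λ)x₀ + λx₁, u_λ = x_λ/|x_λ|, with x₀, x₁ linearly independent in a real inner product space. Then p_λ/|x_λ| equals the weighted harmonic mean ( (1−λ)(p₀/|x₀|)⁻¹ + λ(p₁/|x₁|)⁻¹ )⁻¹. -/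
open Set

/-!
Expanding `p_λ u_λ = p_λ/|x_λ| • ((1-λ) x₀ + λ x₁)` and comparing `x₀`-coefficients (the `x_i` are
linearly independent) gives `p_λ/|x_λ| · (1-λ) = (1-β) p₀/|x₀|`. Since
`1 - β = (1-λ) p₁ |x₀| / D` with `D = (1-λ) p₁ |x₀| + λ p₀ |x₁|`, this says `p_λ/|x_λ| = p₀ p₁ / D`,
which is the weighted harmonic mean of `p₀/|x₀|` and `p₁/|x₁|`.
-/

theorem weighted_harmonic_mean_div_eq {K : Type*} [Field K] {a b : K} (ha : a ≠ 0) (hb : b ≠ 0)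
    (w₀ w₁ m n : K) :
    (w₀ * (a / m)⁻¹ + w₁ * (b / n)⁻¹)⁻¹ = a * b / (w₀ * b * m + w₁ * a * n) := by
  field_simp

/-- The key harmonic-mean computation in the generalized Busemann theorem:
if `p_λ u_λ = (1-β) p₀ u₀ + β p₁ u₁` with
`β = λ p₀ |x₁| / ((1-λ) p₁ |x₀| + λ p₀ |x₁|)`, then
`p_λ/|x_λ| = ((1-λ)(p₀/|x₀|)⁻¹ + λ(p₁/|x₁|)⁻¹)⁻¹`. -/
theorem busemann_harmonic_mean
    {V : Type*} [NormedAddCommGroup V] [InnerProductSpace ℝ V]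
    (x₀ x₁ : V) (hind : LinearIndependent ℝ ![x₀, x₁])
    (p₀ p₁ : ℝ) (hp₀ : 0 < p₀) (hp₁ : 0 < p₁)
    (l : ℝ) (hl : l ∈ Set.Ioo (0 : ℝ) 1)
    (β : ℝ) (hβ : β = l * p₀ * ‖x₁‖ / ((1 - l) * p₁ * ‖x₀‖ + l * p₀ * ‖x₁‖))
    (u₀ u₁ : V) (hu₀ : u₀ = ‖x₀‖⁻¹ • x₀) (hu₁ : u₁ = ‖x₁‖⁻¹ • x₁)
    (xl : V) (hxl : xl = (1 - l) • x₀ + l • x₁)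
    (ul : V) (hul : ul = ‖xl‖⁻¹ • xl)
    (pl : ℝ) (hpl : pl • ul = (1 - β) • (p₀ • u₀) + β • (p₁ • u₁)) :
    pl / ‖xl‖ = ((1 - l) * (p₀ / ‖x₀‖)⁻¹ + l * (p₁ / ‖x₁‖)⁻¹)⁻¹ := by
  obtain ⟨hl₀, hl₁⟩ := hl
  have h1l : 0 < 1 - l := sub_pos.mpr hl₁
  have hn₀ : 0 < ‖x₀‖ := norm_pos_iff.mpr (hind.ne_zero 0)
  have hn₁ : 0 < ‖x₁‖ := norm_pos_iff.mpr (by simpa using hind.ne_zero 1)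
  have hD : 0 < (1 - l) * p₁ * ‖x₀‖ + l * p₀ * ‖x₁‖ := by positivity
  have hcoef : pl / ‖xl‖ * (1 - l) = (1 - β) * (p₀ / ‖x₀‖) := by
    refine (hind.eq_of_pair (t := pl / ‖xl‖ * l) (t' := β * (p₁ / ‖x₁‖)) ?_).1
    subst hul hu₀ hu₁ hxl
    linear_combination (norm := module) hpl
  rw [weighted_harmonic_mean_div_eq hp₀.ne' hp₁.ne']
  refine mul_right_cancel₀ h1l.ne' (hcoef.trans ?_)
  rw [hβ]
  field_simp
  ring
end
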